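/- Let R be a unital associative ring, v ∈ R, m ≥ 1, y_1, …, y_m ∈ R, and q ∈ ℕ. Then v^q * y_1 * y_2 * ⋯ * y_m = Σ_{d ∈ ℕ^m, d_1 + ⋯ + d_m ≤ q} (q! / (d_1! ⋯ d_m! (q − Σ_j d_j)!)) · ad_v^{d_1}(y_1) * ad_v^{d_2}(y_2) * ⋯ * ad_v^{d_m}(y_m) * v^{q − Σ_j d_j}, where the multinomial coefficient is a natural number acting on R by nsmul and ad_v^0 is the identity. -/
import Mathlib


/-- The inner derivation `ad_v : x ↦ v*x - x*v`. -/
def adE {R : Type*} [Ring R] (v : R) : R → R := fun x => v * x - x * v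


lemma adE_pow_mul {R : Type*} [Ring R] (v : R) (q : ℕ) (y : R) :
    v ^ q * y = ∑ k ∈ Finset.range (q + 1),
      q.choose k • ((adE v)^[k] y * v ^ (q - k)) := by
  induction q generalizing y with
  | zero => simp
  | succ q ih =>
    have key : v ^ (q + 1) * y = v ^ q * (adE v y) + (v ^ q * y) * v := by
      simp only [adE]; noncomm_ring
    rw [key, ih (adE v y), ih y, Finset.sum_mul]
    have h1 : ∑ k ∈ Finset.range (q + 1), q.choose k • ((adE v)^[k] (adE v y) * v ^ (q - k))
        = ∑ k ∈ Finset.range (q + 1), q.choose k • ((adE v)^[k + 1] y * v ^ (q + 1 - (k + 1))) := by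
      refine Finset.sum_congr rfl fun k hk => ?_
      rw [Function.iterate_succ_apply, Nat.succ_sub_succ]
    have h2 : ∑ k ∈ Finset.range (q + 1), q.choose k • ((adE v)^[k] y * v ^ (q - k)) * v
        = ∑ k ∈ Finset.range (q + 1), q.choose k • ((adE v)^[k] y * v ^ (q + 1 - k)) := by
      refine Finset.sum_congr rfl fun k hk => ?_
      rw [smul_mul_assoc, mul_assoc, ← pow_succ]
      simp only [Finset.mem_range] at hk
      congr 3
      omega
    rw [h1, h2]
    have h4 : ∑ k ∈ Finset.range (q + 1), q.choose k • ((adE v)^[k] y * v ^ (q + 1 - k))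
        = (∑ k ∈ Finset.range (q + 1),
            q.choose (k + 1) • ((adE v)^[k + 1] y * v ^ (q + 1 - (k + 1))))
          + q.choose 0 • ((adE v)^[0] y * v ^ (q + 1 - 0)) := by
      rw [← Finset.sum_range_succ' (fun k => q.choose k • ((adE v)^[k] y * v ^ (q + 1 - k))) (q + 1)]
      conv_rhs => rw [Finset.sum_range_succ]
      rw [Nat.choose_succ_self, zero_smul, add_zero]
    rw [h4]
    conv_rhs => rw [Finset.sum_range_succ'
      (fun k => (q + 1).choose k • ((adE v)^[k] y * v ^ (q + 1 - k))) (q + 1)]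
    simp only [Nat.choose_succ_succ, add_smul, Finset.sum_add_distrib, Nat.choose_zero_right]
    abel

lemma coeff_step (m q k t : ℕ) (d : Fin m → ℕ) (hkt : k + t ≤ q) (hd : ∑ j, d j = t) :
    q.choose k *
        ((q - k).factorial / ((∏ j, (d j).factorial) * (q - k - t).factorial)) =
      q.factorial /
        ((∏ j : Fin (m + 1), ((Fin.cons k d : Fin (m + 1) → ℕ) j).factorial)
          * (q - (k + t)).factorial) := by
  have hk : k ≤ q := by omega
  have hprod : (∏ j : Fin (m + 1), ((Fin.cons k d : Fin (m + 1) → ℕ) j).factorial)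
      = k.factorial * ∏ j, (d j).factorial := by
    rw [Fin.prod_univ_succ]
    simp
  have hdvd1 : k.factorial * (q - k).factorial ∣ q.factorial :=
    Nat.factorial_mul_factorial_dvd_factorial hk
  have hdvd2 : (∏ j, (d j).factorial) * (q - k - t).factorial ∣ (q - k).factorial := by
    have := Nat.prod_factorial_dvd_factorial_sum Finset.univ
      (Fin.cons (q - k - t) d : Fin (m + 1) → ℕ)
    rw [Fin.prod_univ_succ, Fin.sum_univ_succ] at this
    simp only [Fin.cons_zero, Fin.cons_succ] at this
    rw [hd] at this
    have hsum : q - k - t + t = q - k := by omega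
    rw [hsum] at this
    calc (∏ j, (d j).factorial) * (q - k - t).factorial
        = (q - k - t).factorial * ∏ j, (d j).factorial := by ring
      _ ∣ (q - k).factorial := this
  rw [Nat.choose_eq_factorial_div_factorial hk,
    Nat.div_mul_div_comm hdvd1 hdvd2, hprod]
  have h1 : q.factorial * (q - k).factorial
      = (q - k).factorial * q.factorial := by ring
  have h2 : k.factorial * (q - k).factorial * ((∏ j, (d j).factorial) * (q - k - t).factorial)
      = (q - k).factorial * (k.factorial * (∏ j, (d j).factorial) * (q - (k + t)).factorial) := by
    rw [show q - (k + t) = q - k - t by omega]; ring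
  rw [h1, h2, Nat.mul_div_mul_left _ _ (Nat.factorial_pos _)]

lemma reindex_sum {M : Type*} [AddCommMonoid M] (n q : ℕ) (F : ℕ → (Fin (n + 2) → ℕ) → M) :
    ∑ s ∈ Finset.range (q + 1), ∑ e ∈ Finset.Nat.antidiagonalTuple (n + 2) s, F s e
    = ∑ k ∈ Finset.range (q + 1), ∑ t ∈ Finset.range (q - k + 1),
        ∑ d ∈ Finset.Nat.antidiagonalTuple (n + 1) t, F (k + t) (Fin.cons k d) := by
  simp only [Finset.sum_sigma']
  refine Finset.sum_nbij' (fun p => ⟨p.2 0, ⟨p.1 - p.2 0, Fin.tail p.2⟩⟩)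
    (fun p => ⟨p.2.1 + p.1, Fin.cons p.1 p.2.2⟩) ?_ ?_ ?_ ?_ ?_
  · rintro ⟨s, e⟩ hm
    simp only [Finset.mem_sigma, Finset.mem_range, Finset.Nat.mem_antidiagonalTuple] at hm ⊢
    obtain ⟨hs, he⟩ := hm
    rw [Fin.sum_univ_succ] at he
    have htail : ∑ j, Fin.tail e j = s - e 0 := by
      simp only [Fin.tail]; omega
    exact ⟨by omega, by omega, htail⟩
  · rintro ⟨k, t, d⟩ hm
    simp only [Finset.mem_sigma, Finset.mem_range, Finset.Nat.mem_antidiagonalTuple] at hm ⊢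
    obtain ⟨hk, ht, hd⟩ := hm
    constructor
    · omega
    · rw [Fin.sum_univ_succ]
      simp only [Fin.cons_zero, Fin.cons_succ]
      omega
  · rintro ⟨s, e⟩ hm
    simp only [Finset.mem_sigma, Finset.mem_range, Finset.Nat.mem_antidiagonalTuple] at hm
    obtain ⟨hs, he⟩ := hm
    rw [Fin.sum_univ_succ] at he
    have h1 : s - e 0 + e 0 = s := by omega
    simp only [h1, Fin.cons_self_tail]
  · rintro ⟨k, t, d⟩ hm
    simp only [Finset.mem_sigma, Finset.mem_range, Finset.Nat.mem_antidiagonalTuple] at hm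
    simp [Fin.tail_cons]
  · rintro ⟨s, e⟩ hm
    simp only [Finset.mem_sigma, Finset.mem_range, Finset.Nat.mem_antidiagonalTuple] at hm
    obtain ⟨hs, he⟩ := hm
    rw [Fin.sum_univ_succ] at he
    have h1 : e 0 + (s - e 0) = s := by omega
    simp only [h1, Fin.cons_self_tail]

lemma main_aux {R : Type*} [Ring R] (v : R) : ∀ (n : ℕ) (y : Fin (n + 1) → R) (q : ℕ),
    v ^ q * (List.ofFn y).prod =
      ∑ t ∈ Finset.range (q + 1), ∑ d ∈ Finset.Nat.antidiagonalTuple (n + 1) t,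
        (Nat.factorial q /
            ((∏ j, Nat.factorial (d j)) * Nat.factorial (q - t))) •
          ((List.ofFn fun j => (adE v)^[d j] (y j)).prod * v ^ (q - t))
  | 0, y, q => by
    have : (List.ofFn y).prod = y 0 := by simp [List.ofFn_succ]
    rw [this, adE_pow_mul]
    refine Finset.sum_congr rfl fun t ht => ?_
    simp only [Finset.mem_range] at ht
    rw [Finset.Nat.antidiagonalTuple_one, Finset.sum_singleton]
    have h1 : (∏ j : Fin 1, Nat.factorial (![t] j)) = t.factorial := by simp
    have h2 : (List.ofFn fun j : Fin 1 => (adE v)^[![t] j] (y j)).prod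
        = (adE v)^[t] (y 0) := by simp [List.ofFn_succ]
    rw [h1, h2, Nat.choose_eq_factorial_div_factorial (by omega : t ≤ q)]
  | (n + 1), y, q => by
    have hsplit : (List.ofFn y).prod = y 0 * (List.ofFn fun j : Fin (n + 1) => y j.succ).prod := by
      rw [List.ofFn_succ, List.prod_cons]
    rw [hsplit, ← mul_assoc, adE_pow_mul v q (y 0), Finset.sum_mul]
    have step1 : ∀ k ∈ Finset.range (q + 1),
        q.choose k • ((adE v)^[k] (y 0) * v ^ (q - k)) *
            (List.ofFn fun j : Fin (n + 1) => y j.succ).prod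
        = ∑ t ∈ Finset.range (q - k + 1), ∑ d ∈ Finset.Nat.antidiagonalTuple (n + 1) t,
            (q.choose k * ((q - k).factorial /
              ((∏ j, Nat.factorial (d j)) * Nat.factorial (q - k - t)))) •
            ((adE v)^[k] (y 0) *
              ((List.ofFn fun j : Fin (n + 1) => (adE v)^[d j] (y j.succ)).prod * v ^ (q - k - t))) := by
      intro k hk
      rw [smul_mul_assoc, mul_assoc, main_aux v n (fun j => y j.succ) (q - k), Finset.mul_sum,
        Finset.smul_sum]
      refine Finset.sum_congr rfl fun t ht => ?_
      rw [Finset.mul_sum, Finset.smul_sum]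
      refine Finset.sum_congr rfl fun d hd => ?_
      rw [mul_smul_comm, smul_smul]
    rw [Finset.sum_congr rfl step1, reindex_sum n q (fun s e =>
      (q.factorial / ((∏ j, Nat.factorial (e j)) * Nat.factorial (q - s))) •
        ((List.ofFn fun j => (adE v)^[e j] (y j)).prod * v ^ (q - s)))]
    · refine Finset.sum_congr rfl fun k hk => Finset.sum_congr rfl fun t ht =>
        Finset.sum_congr rfl fun d hd => ?_
      simp only [Finset.mem_range] at hk ht
      rw [Finset.Nat.mem_antidiagonalTuple] at hd
      rw [coeff_step (n + 1) q k t d (by omega) hd]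
      congr 1
      have hq : q - (k + t) = q - k - t := by omega
      have hlist : (List.ofFn fun j : Fin (n + 2) =>
            (adE v)^[(Fin.cons k d : Fin (n + 2) → ℕ) j] (y j))
          = (adE v)^[k] (y 0) :: List.ofFn fun i : Fin (n + 1) => (adE v)^[d i] (y i.succ) := by
        rw [List.ofFn_succ]
        simp
      rw [hq, hlist, List.prod_cons, mul_assoc]

/-- `v^q · y_1 ⋯ y_m = Σ_{d ∈ ℕ^m, Σd ≤ q} (q! / (d_1!⋯d_m!(q-Σd)!)) ·
ad_v^{d_1}(y_1) ⋯ ad_v^{d_m}(y_m) · v^{q-Σd}`.  The sum over all `d` with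
`Σ_j d_j ≤ q` is organized according to `t = Σ_j d_j`. -/
theorem stmt_16 (R : Type*) [Ring R] (v : R) (m : ℕ) (hm : 1 ≤ m)
    (y : Fin m → R) (q : ℕ) :
    v ^ q * (List.ofFn y).prod =
      ∑ t ∈ Finset.range (q + 1), ∑ d ∈ Finset.Nat.antidiagonalTuple m t,
        (Nat.factorial q /
            ((∏ j : Fin m, Nat.factorial (d j)) * Nat.factorial (q - t))) •
          ((List.ofFn fun j => (adE v)^[d j] (y j)).prod * v ^ (q - t)) := by
  obtain ⟨n, rfl⟩ : ∃ n, m = n + 1 := ⟨m - 1, by omega⟩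
  exact main_aux v n y q
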